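/- arXiv:2108.00592 — 6 statements merged into one kernel-verified Lean document; each statement's English description precedes it below -/
import Mathlib

section
/- Let G and H be simple graphs on n vertices with det W(G) ≠ 0. Then H is generalized cospectral with G (i.e., G and H are cospectral and their complements are cospectral) if and only if there exists a unique regular rational orthogonal matrix Q such that Q^T A(G) Q = A(H). -/
open Matrix Polynomial
open scoped Classical

noncomputable section

/-- The adjacency matrix of a simple graph on `Fin n`, with integer entries. -/
def adjMat (n : ℕ) (G : SimpleGraph (Fin n)) : Matrix (Fin n) (Fin n) ℤ :=
  Matrix.of fun i j => if G.Adj i j then 1 else 0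

/-- The walk matrix `W = [e, Ae, ..., A^{n-1}e]` of a matrix `A`. -/
def walkMat {n : ℕ} (A : Matrix (Fin n) (Fin n) ℤ) : Matrix (Fin n) (Fin n) ℤ :=
  Matrix.of fun i j => ((A ^ (j : ℕ)) *ᵥ fun _ => (1 : ℤ)) i

/-- Two graphs are generalized cospectral if they are cospectral and so are their complements. -/
def genCospectral {n : ℕ} (G H : SimpleGraph (Fin n)) : Prop :=
  (adjMat n G).charpoly = (adjMat n H).charpoly ∧
  (adjMat n Gᶜ).charpoly = (adjMat n Hᶜ).charpoly

/-!
Write `q_A = 1ᵀ adj(X - A) 1`. By the matrix determinant lemma the complement `J - I - A` has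
characteristic polynomial `(-1)ⁿ (χ_A + q_A)(-1 - X)`, so generalized cospectrality of `A` and `B`
means `χ_A = χ_B` and `q_A = q_B`. Since `q_A / χ_A = ∑ₖ (1ᵀ Aᵏ 1) X^(-k-1)`, the walk counts
`1ᵀ Aᵏ 1` are determined by `χ_A` and `q_A`. For symmetric `A` they are the entries of the Gram
matrices `Wᵀ W` and `Wᵀ A W` of the walk matrix `W`, so `Q = W(A) W(B)⁻¹` is orthogonal with
`Qᵀ A Q = B`, and `Q 1 = 1` because `1` is the first column of every walk matrix. Conversely every
regular orthogonal `Q` with `Qᵀ A Q = B` satisfies `Q W(B) = W(A)`, which gives uniqueness, and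
fixes `J = 1 1ᵀ`, which gives cospectrality of the complements.
-/

namespace Polynomial

variable {R : Type*} [CommRing R]

theorem neg_one_sub_X_comp_neg_one_sub_X : (-1 - X : R[X]).comp (-1 - X) = X := by
  simp only [sub_comp, neg_comp, one_comp, X_comp]
  ring

def algEquivAevalNegOneSubX : R[X] ≃ₐ[R] R[X] :=
  algEquivOfCompEqX (-1 - X) (-1 - X) neg_one_sub_X_comp_neg_one_sub_X
    neg_one_sub_X_comp_neg_one_sub_X

end Polynomial

namespace Matrix

variable {ι R : Type*} [Fintype ι] [DecidableEq ι] [CommRing R]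

theorem det_add_vecMulVec_of_field {K : Type*} [Field K] {M : Matrix ι ι K} (hM : M.det ≠ 0)
    (u v : ι → K) : (M + vecMulVec u v).det = M.det + v ⬝ᵥ (M.adjugate *ᵥ u) := by
  have hunit : IsUnit M.det := hM.isUnit
  have hfactor : M + vecMulVec u v = M * (1 + vecMulVec (M⁻¹ *ᵥ u) v) := by
    rw [Matrix.mul_add, Matrix.mul_one, mul_vecMulVec, mulVec_mulVec, mul_nonsing_inv _ hunit,
      one_mulVec]
  rw [hfactor, det_mul, vecMulVec_eq (ι := Unit), det_one_add_replicateCol_mul_replicateRow,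
    inv_def, Ring.inverse_eq_inv', smul_mulVec, dotProduct_smul, smul_eq_mul]
  field_simp

theorem det_add_vecMulVec [IsDomain R] {M : Matrix ι ι R} (hM : M.det ≠ 0)
    (u v : ι → R) : (M + vecMulVec u v).det = M.det + v ⬝ᵥ (M.adjugate *ᵥ u) := by
  let f := algebraMap R (FractionRing R)
  apply IsFractionRing.injective R (FractionRing R)
  have hfM : (f.mapMatrix M).det ≠ 0 := by
    rw [← RingHom.map_det, map_ne_zero_iff _ (IsFractionRing.injective R _)]
    exact hM
  have hmap : f.mapMatrix (M + vecMulVec u v) = f.mapMatrix M + vecMulVec (f ∘ u) (f ∘ v) := by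
    ext i j
    simp [vecMulVec_apply]
  have hadj : f ∘ (M.adjugate *ᵥ u) = (f.mapMatrix M).adjugate *ᵥ (f ∘ u) := by
    ext i
    rw [← RingHom.map_adjugate]
    exact RingHom.map_mulVec f _ _ i
  rw [RingHom.map_det, hmap, det_add_vecMulVec_of_field hfM, map_add, RingHom.map_det,
    RingHom.map_dotProduct, hadj]

def walkSum (A : Matrix ι ι R) (k : ℕ) : R := 1 ⬝ᵥ (A ^ k *ᵥ 1)

/-- The numerator of the walk generating function:
`walkPoly A / A.charpoly = ∑ k, walkSum A k * X⁻¹ ^ (k + 1)`. -/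
def walkPoly (A : Matrix ι ι R) : R[X] := 1 ⬝ᵥ ((charmatrix A).adjugate *ᵥ 1)

theorem adjugate_charmatrix_mem_degreeLT [Nontrivial R] (A : Matrix ι ι R) (i j : ι) :
    (charmatrix A).adjugate i j ∈ degreeLT R (Fintype.card ι) := by
  have : Nonempty ι := ⟨i⟩
  set N := matPolyEquiv (charmatrix A).adjugate
  have hN : (X - C A) * N = A.charpoly.map (algebraMap R (Matrix ι ι R)) := by
    rw [← matPolyEquiv_charmatrix, ← map_mul, mul_adjugate, ← matPolyEquiv_smul_one]
    rfl
  have hdeg : N.natDegree < Fintype.card ι := by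
    rcases eq_or_ne N 0 with hN0 | hN0
    · simp [hN0, Fintype.card_pos]
    · have h := congrArg natDegree hN
      rw [(monic_X_sub_C A).natDegree_mul' hN0, natDegree_X_sub_C] at h
      have := h.trans_le (natDegree_map_le.trans_eq A.charpoly_natDegree_eq_dim)
      omega
  rw [mem_degreeLT, degree_lt_iff_coeff_zero]
  intro k hk
  rw [← matPolyEquiv_coeff_apply, coeff_eq_zero_of_natDegree_lt (hdeg.trans_le hk)]
  rfl

theorem adjugate_charmatrix_mul_pow_sub_pow (A : Matrix ι ι R) (m : ℕ) :
    (charmatrix A).adjugate * (scalar ι (X : R[X]) ^ m - C.mapMatrix A ^ m) =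
      A.charpoly •
        ∑ i ∈ Finset.range m, scalar ι (X : R[X]) ^ i * C.mapMatrix A ^ (m - 1 - i) := by
  rw [← (scalar_commute X (Commute.all X) _).mul_geom_sum₂, ← Matrix.mul_assoc]
  change _ * charmatrix A * _ = _
  rw [adjugate_mul, smul_mul, Matrix.one_mul]
  rfl

theorem one_dotProduct_C_mapMatrix_pow_mulVec_one (A : Matrix ι ι R) (k : ℕ) :
    1 ⬝ᵥ (C.mapMatrix (A ^ k) *ᵥ 1) = C (walkSum A k) := by
  ext
  simp [walkSum, dotProduct, mulVec, Polynomial.coeff_C]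

theorem X_pow_mul_walkPoly (A : Matrix ι ι R) (m : ℕ) :
    X ^ m * walkPoly A = 1 ⬝ᵥ (((charmatrix A).adjugate * C.mapMatrix (A ^ m)) *ᵥ 1) +
      A.charpoly * ∑ i ∈ Finset.range m, X ^ i * C (walkSum A (m - 1 - i)) := by
  have h := congrArg (fun M => 1 ⬝ᵥ (M *ᵥ 1)) (adjugate_charmatrix_mul_pow_sub_pow A m)
  simp only [Matrix.mul_sub, sub_mulVec, dotProduct_sub, ← map_pow, scalar_apply,
    ← smul_one_eq_diagonal, _root_.smul_pow, one_pow, Matrix.mul_smul, Matrix.smul_mul,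
    Matrix.mul_one, Matrix.one_mul, smul_mulVec, dotProduct_smul, smul_eq_mul, Matrix.sum_mulVec,
    dotProduct_sum, one_dotProduct_C_mapMatrix_pow_mulVec_one] at h
  rw [← sub_eq_iff_eq_add', ← h, walkPoly]

theorem one_dotProduct_adjugate_charmatrix_mul_mulVec_one_mem_degreeLT [Nontrivial R]
    (A B : Matrix ι ι R) :
    1 ⬝ᵥ (((charmatrix A).adjugate * C.mapMatrix B) *ᵥ 1) ∈ degreeLT R (Fintype.card ι) := by
  simp only [dotProduct, mulVec, mul_apply, Pi.one_apply, one_mul, mul_one]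
  refine Submodule.sum_mem _ fun i _ => Submodule.sum_mem _ fun j _ =>
    Submodule.sum_mem _ fun k _ => ?_
  rw [RingHom.mapMatrix_apply, map_apply, mul_comm, ← smul_eq_C_mul]
  exact Submodule.smul_mem _ _ (adjugate_charmatrix_mem_degreeLT A i k)

theorem walkSum_eq_coeff_divByMonic [Nontrivial R] (A : Matrix ι ι R) (k : ℕ) :
    walkSum A k = ((X ^ (k + 1) * walkPoly A) /ₘ A.charpoly).coeff 0 := by
  obtain ⟨hdiv, -⟩ := div_modByMonic_unique _ _ A.charpoly_monic
    ⟨(X_pow_mul_walkPoly A (k + 1)).symm, by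
      rw [charpoly_degree_eq_dim, ← mem_degreeLT]
      exact one_dotProduct_adjugate_charmatrix_mul_mulVec_one_mem_degreeLT A _⟩
  rw [hdiv, Finset.sum_range_succ']
  simp [finsetSum_coeff]

theorem charmatrix_of_one_sub_one_sub (A : Matrix ι ι R) :
    charmatrix (of 1 - 1 - A) =
      -((charmatrix A).map algEquivAevalNegOneSubX + vecMulVec 1 1) := by
  refine Matrix.ext fun i j => ?_
  by_cases hij : i = j <;> simp [algEquivAevalNegOneSubX, hij] <;> ring

theorem one_dotProduct_adjugate_map_mulVec_one {S F : Type*} [CommRing S] [FunLike F R S]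
    [RingHomClass F R S] (f : F) (M : Matrix ι ι R) :
    1 ⬝ᵥ ((M.map f).adjugate *ᵥ 1) = f (1 ⬝ᵥ (M.adjugate *ᵥ 1)) := by
  rw [show M.map f = (f : R →+* S).mapMatrix M from rfl, ← RingHom.map_adjugate]
  simp [dotProduct, mulVec, map_sum]

theorem charpoly_of_one_sub_one_sub [IsDomain R] (A : Matrix ι ι R) :
    (of 1 - 1 - A).charpoly =
      (-1) ^ Fintype.card ι * algEquivAevalNegOneSubX (A.charpoly + walkPoly A) := by
  have hdet : ((charmatrix A).map algEquivAevalNegOneSubX).det =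
      algEquivAevalNegOneSubX A.charpoly := by
    rw [charpoly, AlgEquiv.map_det]
    rfl
  rw [charpoly, charmatrix_of_one_sub_one_sub, det_neg, det_add_vecMulVec, hdet,
    one_dotProduct_adjugate_map_mulVec_one, map_add]
  · rfl
  · rw [hdet]
    exact (map_ne_zero_iff _ algEquivAevalNegOneSubX.injective).mpr A.charpoly_monic.ne_zero

theorem walkSum_eq_of_charpoly_eq [IsDomain R] {A B : Matrix ι ι R}
    (h : A.charpoly = B.charpoly) (hc : (of 1 - 1 - A).charpoly = (of 1 - 1 - B).charpoly)
    (k : ℕ) : walkSum A k = walkSum B k := by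
  have hq : walkPoly A = walkPoly B := by
    rw [charpoly_of_one_sub_one_sub, charpoly_of_one_sub_one_sub, h] at hc
    exact add_left_cancel <| algEquivAevalNegOneSubX.injective <|
      mul_left_cancel₀ (pow_ne_zero _ (neg_ne_zero.mpr one_ne_zero)) hc
  rw [walkSum_eq_coeff_divByMonic, walkSum_eq_coeff_divByMonic, h, hq]

variable {n : ℕ}

def walkMatrix (A : Matrix (Fin n) (Fin n) R) : Matrix (Fin n) (Fin n) R :=
  of fun i j => (A ^ (j : ℕ) *ᵥ 1) i

theorem walkMatrix_map {S : Type*} [CommRing S] (f : R →+* S) (A : Matrix (Fin n) (Fin n) R) :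
    walkMatrix (A.map f) = (walkMatrix A).map f := by
  ext i j
  simp only [walkMatrix, of_apply, map_apply, RingHom.map_mulVec, ← RingHom.mapMatrix_apply,
    map_pow]
  congr
  ext
  simp

theorem mul_walkMatrix_apply (M A : Matrix (Fin n) (Fin n) R) (i j : Fin n) :
    (M * walkMatrix A) i j = ((M * A ^ (j : ℕ)) *ᵥ 1) i := by
  rw [← mulVec_mulVec]
  rfl

theorem transpose_walkMatrix_mul_pow_mul_walkMatrix {A : Matrix (Fin n) (Fin n) R}
    (hA : A.IsSymm) (m : ℕ) (i j : Fin n) :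
    ((walkMatrix A)ᵀ * A ^ m * walkMatrix A) i j = walkSum A (i + m + j) := by
  have hrow : A ^ (i : ℕ) *ᵥ 1 = 1 ᵥ* A ^ (i : ℕ) := by
    rw [← vecMul_transpose, transpose_pow, hA.eq]
  calc ((walkMatrix A)ᵀ * A ^ m * walkMatrix A) i j
      = (A ^ (i : ℕ) *ᵥ 1) ⬝ᵥ ((A ^ m * A ^ (j : ℕ)) *ᵥ 1) := by
        rw [mul_walkMatrix_apply, Matrix.mul_assoc, ← mulVec_mulVec]
        rfl
    _ = walkSum A (i + m + j) := by
        rw [hrow, ← dotProduct_mulVec, mulVec_mulVec, ← pow_add, ← pow_add, ← add_assoc]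
        rfl

theorem mul_walkMatrix_eq_of_semiconjBy {A B Q : Matrix (Fin n) (Fin n) R} (hQ : Q *ᵥ 1 = 1)
    (h : SemiconjBy Q B A) : Q * walkMatrix B = walkMatrix A := by
  ext i j
  rw [mul_walkMatrix_apply, (h.pow_right j).eq, ← mulVec_mulVec, hQ]
  rfl

theorem mulVec_one_of_mul_walkMatrix_eq {A B Q : Matrix (Fin n) (Fin n) R}
    (h : Q * walkMatrix B = walkMatrix A) : Q *ᵥ 1 = 1 := by
  ext i
  have hcol := congrFun (congrFun h i) ⟨0, i.pos⟩
  rwa [mul_walkMatrix_apply, pow_zero, Matrix.mul_one, walkMatrix, of_apply, pow_zero,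
    one_mulVec] at hcol

theorem charpoly_map_eq_iff {S : Type*} [CommRing S] {f : R →+* S} (hf : Function.Injective f)
    (M N : Matrix ι ι R) : (M.map f).charpoly = (N.map f).charpoly ↔ M.charpoly = N.charpoly := by
  rw [charpoly_map, charpoly_map, (Polynomial.map_injective f hf).eq_iff]

theorem charpoly_transpose_mul_mul {Q : Matrix ι ι R} (hQ : Qᵀ * Q = 1) (M : Matrix ι ι R) :
    (Qᵀ * M * Q).charpoly = M.charpoly := by
  rw [charpoly_mul_comm, ← Matrix.mul_assoc, mul_eq_one_comm.mp hQ, Matrix.one_mul]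

theorem transpose_mul_of_one_mul_eq_of_one {Q : Matrix ι ι R} (hQ : Qᵀ * Q = 1)
    (hreg : Q *ᵥ 1 = 1) : Qᵀ * of 1 * Q = of 1 := by
  have hregT : Qᵀ *ᵥ 1 = 1 := by
    conv_lhs => rw [← hreg]
    rw [mulVec_mulVec, hQ, one_mulVec]
  have hJ : (of 1 : Matrix ι ι R) = vecMulVec 1 1 := by
    ext
    simp [vecMulVec_apply]
  rw [hJ, mul_vecMulVec, vecMulVec_mul, hregT, ← mulVec_transpose, hregT]

theorem charpoly_eq_of_transpose_mul_mul_eq {Q A B : Matrix ι ι R} (hQ : Qᵀ * Q = 1)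
    (hreg : Q *ᵥ 1 = 1) (h : Qᵀ * A * Q = B) :
    A.charpoly = B.charpoly ∧ (of 1 - 1 - A).charpoly = (of 1 - 1 - B).charpoly := by
  have hcompl : Qᵀ * (of 1 - 1 - A) * Q = of 1 - 1 - B := by
    rw [Matrix.mul_sub, Matrix.mul_sub, Matrix.sub_mul, Matrix.sub_mul, Matrix.mul_one, hQ,
      transpose_mul_of_one_mul_eq_of_one hQ hreg, h]
  rw [← hcompl, ← h, charpoly_transpose_mul_mul hQ, charpoly_transpose_mul_mul hQ]
  exact ⟨rfl, rfl⟩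

theorem transpose_mul_mul_eq_of_transpose_mul_mul_eq {P S M N : Matrix ι ι R} (hS : IsUnit S.det)
    (h : Pᵀ * M * P = Sᵀ * N * S) : (P * S⁻¹)ᵀ * M * (P * S⁻¹) = N := by
  calc (P * S⁻¹)ᵀ * M * (P * S⁻¹) = (S⁻¹)ᵀ * (Pᵀ * M * P) * S⁻¹ := by
        simp only [transpose_mul, Matrix.mul_assoc]
    _ = (S * S⁻¹)ᵀ * N * (S * S⁻¹) := by
        simp only [h, transpose_mul, Matrix.mul_assoc]
    _ = N := by
        rw [mul_nonsing_inv _ hS, transpose_one, Matrix.one_mul, Matrix.mul_one]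

variable {K : Type*} [Field K]

theorem existsUnique_regular_orthogonal_conj_of_walkSum_eq {A B : Matrix (Fin n) (Fin n) K}
    (hA : A.IsSymm) (hB : B.IsSymm) (hW : (walkMatrix A).det ≠ 0)
    (hwalk : ∀ k, walkSum A k = walkSum B k) :
    ∃! Q : Matrix (Fin n) (Fin n) K, (Qᵀ * Q = 1 ∧ Q *ᵥ 1 = 1) ∧ Qᵀ * A * Q = B := by
  have hgram : ∀ m,
      (walkMatrix A)ᵀ * A ^ m * walkMatrix A = (walkMatrix B)ᵀ * B ^ m * walkMatrix B :=
    fun m => Matrix.ext fun i j => by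
      rw [transpose_walkMatrix_mul_pow_mul_walkMatrix hA,
        transpose_walkMatrix_mul_pow_mul_walkMatrix hB, hwalk]
  have hV : IsUnit (walkMatrix B).det := by
    have hdet := congrArg det (hgram 0)
    simp only [pow_zero, Matrix.mul_one, det_mul, det_transpose] at hdet
    refine isUnit_iff_ne_zero.mpr fun h0 => hW (mul_self_eq_zero.mp ?_)
    rw [hdet, h0, mul_zero]
  refine ⟨walkMatrix A * (walkMatrix B)⁻¹, ⟨⟨?_, ?_⟩, ?_⟩, ?_⟩
  · simpa using transpose_mul_mul_eq_of_transpose_mul_mul_eq hV (hgram 0)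
  · exact mulVec_one_of_mul_walkMatrix_eq (nonsing_inv_mul_cancel_right _ _ hV)
  · simpa using transpose_mul_mul_eq_of_transpose_mul_mul_eq hV (hgram 1)
  · rintro Q ⟨⟨hQ, hreg⟩, hconj⟩
    have hsemi : SemiconjBy Q B A := by
      rw [SemiconjBy, ← hconj, ← Matrix.mul_assoc, ← Matrix.mul_assoc, mul_eq_one_comm.mp hQ,
        Matrix.one_mul]
    rw [← mul_walkMatrix_eq_of_semiconjBy hreg hsemi, mul_nonsing_inv_cancel_right _ _ hV]

theorem existsUnique_regular_orthogonal_conj_iff {A B : Matrix (Fin n) (Fin n) K}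
    (hA : A.IsSymm) (hB : B.IsSymm) (hW : (walkMatrix A).det ≠ 0) :
    (A.charpoly = B.charpoly ∧ (of 1 - 1 - A).charpoly = (of 1 - 1 - B).charpoly) ↔
      ∃! Q : Matrix (Fin n) (Fin n) K, (Qᵀ * Q = 1 ∧ Q *ᵥ 1 = 1) ∧ Qᵀ * A * Q = B := by
  constructor
  · rintro ⟨h, hc⟩
    exact existsUnique_regular_orthogonal_conj_of_walkSum_eq hA hB hW
      (walkSum_eq_of_charpoly_eq h hc)
  · rintro ⟨Q, ⟨⟨hQ, hreg⟩, hconj⟩, -⟩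
    exact charpoly_eq_of_transpose_mul_mul_eq hQ hreg hconj

end Matrix

theorem SimpleGraph.adjMatrix_compl_eq_of_one_sub_one_sub {V α : Type*} [DecidableEq V]
    [AddCommGroup α] [One α] (G : SimpleGraph V) [DecidableRel G.Adj] [DecidableRel Gᶜ.Adj] :
    Gᶜ.adjMatrix α = Matrix.of 1 - 1 - G.adjMatrix α := by
  rw [← adjMatrix_completeGraph_eq_of_one_sub_one,
    ← IsCompl.adjMatrix_add_adjMatrix_eq_adjMatrix_completeGraph (G := G) α isCompl_compl,
    add_sub_cancel_left]

theorem walkMat_eq_walkMatrix {n : ℕ} (A : Matrix (Fin n) (Fin n) ℤ) : walkMat A = walkMatrix A :=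
  rfl

theorem adjMat_map_intCast {n : ℕ} (G : SimpleGraph (Fin n)) :
    (adjMat n G).map (Int.cast : ℤ → ℚ) = G.adjMatrix ℚ := by
  ext i j
  by_cases h : G.Adj i j <;> simp [adjMat, h]

/-- Johnson–Newman / Wang–Xu: if `det W(G) ≠ 0`, then `H` is generalized
cospectral with `G` iff there is a unique regular rational orthogonal `Q` with `Qᵀ A(G) Q = A(H)`. -/
theorem stmt4 (n : ℕ) (G H : SimpleGraph (Fin n))
    (hdet : (walkMat (adjMat n G)).det ≠ 0) :
    genCospectral G H ↔
    ∃! Q : Matrix (Fin n) (Fin n) ℚ,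
      (Qᵀ * Q = 1 ∧ (Q *ᵥ fun _ => (1 : ℚ)) = (fun _ => 1)) ∧
      Qᵀ * (adjMat n G).map (Int.cast : ℤ → ℚ) * Q =
        (adjMat n H).map (Int.cast : ℤ → ℚ) := by
  have hW : (walkMatrix (G.adjMatrix ℚ)).det ≠ 0 := by
    rw [← adjMat_map_intCast]
    change (walkMatrix ((adjMat n G).map (Int.castRingHom ℚ))).det ≠ 0
    rw [walkMatrix_map, ← RingHom.mapMatrix_apply, ← RingHom.map_det, ← walkMat_eq_walkMatrix]
    simpa using hdet
  rw [genCospectral, ← charpoly_map_eq_iff (Int.castRingHom ℚ).injective_int,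
    ← charpoly_map_eq_iff (Int.castRingHom ℚ).injective_int]
  simp only [Int.coe_castRingHom, adjMat_map_intCast,
    SimpleGraph.adjMatrix_compl_eq_of_one_sub_one_sub]
  exact existsUnique_regular_orthogonal_conj_iff G.isSymm_adjMatrix H.isSymm_adjMatrix hW
end
end

section
/- Let Q be an n×n rational orthogonal matrix with level ℓ, and let X and Y be nonsingular n×n integral matrices such that QX = Y. Then ℓ divides gcd(d_n(X), d_n(Y)), where d_n(X) and d_n(Y) are the n-th (largest) invariant factors of X and Y respectively. -/
/-!
If every invariant factor of `X` divides `m`, then the Smith normal form `X = U D V` gives an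
integral `Z = V⁻¹ (m D⁻¹) U⁻¹` with `X Z = m I`. Hence `m Q = Q X Z = Y Z` is integral, and since
the integers `k` making `k Q` integral are exactly the multiples of the level, `ℓ ∣ m`; for
`m = d_n(X)` this gives `ℓ ∣ d_n(X)`. The same argument applied to `Qᵀ Y = X` gives `ℓ ∣ d_n(Y)`.
-/

open Matrix

noncomputable section

/-- `ℓ` is the level of the rational matrix `Q`: the smallest positive integer `k`
such that `k • Q` is an integral matrix. -/
def IsLevel {n : ℕ} (Q : Matrix (Fin n) (Fin n) ℚ) (ℓ : ℕ) : Prop :=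
  0 < ℓ ∧ (∀ i j, ∃ z : ℤ, (ℓ : ℚ) * Q i j = z) ∧
  ∀ k : ℕ, 0 < k → (∀ i j, ∃ z : ℤ, (k : ℚ) * Q i j = z) → ℓ ≤ k

/-- A square integral matrix is unimodular if its determinant is a unit (i.e. `±1`). -/
def IsUnimodular {n : ℕ} (U : Matrix (Fin n) (Fin n) ℤ) : Prop :=
  IsUnit U.det

/-- `diag d` is the Smith normal form of `W`: `W = U (diag d) V` with `U, V` unimodular
and `d_i ∣ d_{i+1}`. -/
def IsSNF {n : ℕ} (W : Matrix (Fin n) (Fin n) ℤ) (d : Fin n → ℤ) : Prop :=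
  (∃ U V : Matrix (Fin n) (Fin n) ℤ, IsUnimodular U ∧ IsUnimodular V ∧
    W = U * Matrix.diagonal d * V) ∧
  ∀ i j : Fin n, i ≤ j → d i ∣ d j

namespace IsLevel

variable {n : ℕ} {Q : Matrix (Fin n) (Fin n) ℚ} {ℓ : ℕ}

theorem transpose (hℓ : IsLevel Q ℓ) : IsLevel Qᵀ ℓ :=
  ⟨hℓ.1, fun i j => hℓ.2.1 j i, fun k hk hkQ => hℓ.2.2 k hk fun i j => hkQ j i⟩

theorem dvd_of_forall_exists_int (hℓ : IsLevel Q ℓ) {m : ℤ}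
    (hm : ∀ i j, ∃ z : ℤ, (m : ℚ) * Q i j = z) : (ℓ : ℤ) ∣ m := by
  obtain ⟨hℓpos, hℓQ, hℓmin⟩ := hℓ
  have hℓpos' : (0 : ℤ) < ℓ := by exact_mod_cast hℓpos
  set r := m % ℓ with hr
  have hr_nonneg : 0 ≤ r := Int.emod_nonneg m hℓpos'.ne'
  have hr_lt : r < ℓ := Int.emod_lt_of_pos m hℓpos'
  -- `r = m - (m / ℓ) ℓ`, so `r Q` is integral as a combination of `m Q` and `ℓ Q`.
  have hrQ : ∀ i j, ∃ z : ℤ, ((r.toNat : ℕ) : ℚ) * Q i j = z := by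
    intro i j
    obtain ⟨a, ha⟩ := hm i j
    obtain ⟨b, hb⟩ := hℓQ i j
    refine ⟨a - m / ℓ * b, ?_⟩
    have hcast : ((r.toNat : ℕ) : ℚ) = (m : ℚ) - (ℓ : ℚ) * ((m / ℓ : ℤ) : ℚ) := by
      rw [← Int.cast_natCast, Int.toNat_of_nonneg hr_nonneg, hr, Int.emod_def]
      push_cast
      ring
    rw [hcast]
    push_cast
    linear_combination ha - ((m / ℓ : ℤ) : ℚ) * hb
  refine Int.dvd_of_emod_eq_zero (by_contra fun hr0 => ?_)
  have := hℓmin r.toNat (by omega) hrQ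
  omega

end IsLevel

theorem IsSNF.exists_mul_eq_diagonal {n : ℕ} {X : Matrix (Fin n) (Fin n) ℤ} {d : Fin n → ℤ}
    (hX : IsSNF X d) {m : ℤ} (hm : ∀ i, d i ∣ m) :
    ∃ Z : Matrix (Fin n) (Fin n) ℤ, X * Z = diagonal fun _ => m := by
  obtain ⟨⟨U, V, hU, hV, rfl⟩, -⟩ := hX
  refine ⟨V⁻¹ * diagonal (fun i => m / d i) * U⁻¹, ?_⟩
  have hdiag : diagonal d * diagonal (fun i => m / d i) = diagonal fun _ => m := by
    rw [diagonal_mul_diagonal]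
    exact congrArg diagonal (funext fun i => Int.mul_ediv_cancel' (hm i))
  calc U * diagonal d * V * (V⁻¹ * diagonal (fun i => m / d i) * U⁻¹)
      = U * (diagonal d * (V * V⁻¹) * diagonal (fun i => m / d i)) * U⁻¹ := by
        simp only [Matrix.mul_assoc]
    _ = diagonal fun _ => m := by
        rw [mul_nonsing_inv V hV, Matrix.mul_one, hdiag, ← smul_one_eq_diagonal,
          Matrix.mul_smul, Matrix.mul_one, Matrix.smul_mul, mul_nonsing_inv U hU]

theorem IsLevel.dvd_of_isSNF {n : ℕ} {Q : Matrix (Fin n) (Fin n) ℚ} {ℓ : ℕ}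
    (hℓ : IsLevel Q ℓ) {X Y : Matrix (Fin n) (Fin n) ℤ}
    (hQXY : Q * X.map (Int.cast : ℤ → ℚ) = Y.map (Int.cast : ℤ → ℚ))
    {d : Fin n → ℤ} (hX : IsSNF X d) {m : ℤ} (hm : ∀ i, d i ∣ m) : (ℓ : ℤ) ∣ m := by
  obtain ⟨Z, hXZ⟩ := hX.exists_mul_eq_diagonal hm
  have hmQ : Q * diagonal (fun _ => (m : ℚ)) = (Y * Z).map (Int.cast : ℤ → ℚ) := by
    calc Q * diagonal (fun _ => (m : ℚ))
        = Q * (X * Z).map (Int.castRingHom ℚ) := by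
          rw [hXZ, diagonal_map (map_zero _)]
          rfl
      _ = (Y * Z).map (Int.castRingHom ℚ) := by
          rw [Matrix.map_mul, Matrix.map_mul, ← Matrix.mul_assoc]
          exact congrArg (· * _) hQXY
  refine hℓ.dvd_of_forall_exists_int fun i j => ⟨(Y * Z) i j, ?_⟩
  simpa [mul_comm] using congrFun (congrFun hmQ i) j

theorem stmt6_general (n : ℕ) (hn : 0 < n) (Q : Matrix (Fin n) (Fin n) ℚ)
    (hQ : Qᵀ * Q = 1) (ℓ : ℕ) (hℓ : IsLevel Q ℓ)
    (X Y : Matrix (Fin n) (Fin n) ℤ)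
    (hQXY : Q * X.map (Int.cast : ℤ → ℚ) = Y.map (Int.cast : ℤ → ℚ))
    (dX dY : Fin n → ℤ) (hXs : IsSNF X dX) (hYs : IsSNF Y dY) :
    (ℓ : ℤ) ∣ gcd (dX ⟨n - 1, Nat.sub_lt hn Nat.one_pos⟩)
                  (dY ⟨n - 1, Nat.sub_lt hn Nat.one_pos⟩) := by
  have hle_last : ∀ i : Fin n, i ≤ ⟨n - 1, Nat.sub_lt hn Nat.one_pos⟩ := fun i =>
    Fin.le_def.mpr (Nat.le_sub_one_of_lt i.isLt)
  have hQTYX : Qᵀ * Y.map (Int.cast : ℤ → ℚ) = X.map (Int.cast : ℤ → ℚ) := by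
    rw [← hQXY, ← Matrix.mul_assoc, hQ, Matrix.one_mul]
  exact dvd_gcd (hℓ.dvd_of_isSNF hQXY hXs fun i => hXs.2 _ _ (hle_last i))
    (hℓ.transpose.dvd_of_isSNF hQTYX hYs fun i => hYs.2 _ _ (hle_last i))

/-- Lemma 3: if `Q` is a rational orthogonal matrix of level `ℓ` and
`X`, `Y` are nonsingular integral matrices with `Q X = Y`, then `ℓ ∣ gcd (d_n(X), d_n(Y))`. -/
theorem stmt6 (n : ℕ) (hn : 0 < n) (Q : Matrix (Fin n) (Fin n) ℚ)
    (hQ : Qᵀ * Q = 1) (ℓ : ℕ) (hℓ : IsLevel Q ℓ)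
    (X Y : Matrix (Fin n) (Fin n) ℤ) (hX : X.det ≠ 0) (hY : Y.det ≠ 0)
    (hQXY : Q * X.map (Int.cast : ℤ → ℚ) = Y.map (Int.cast : ℤ → ℚ))
    (dX dY : Fin n → ℤ) (hXs : IsSNF X dX) (hYs : IsSNF Y dY) :
    (ℓ : ℤ) ∣ gcd (dX ⟨n - 1, Nat.sub_lt hn Nat.one_pos⟩)
                  (dY ⟨n - 1, Nat.sub_lt hn Nat.one_pos⟩) :=
  stmt6_general n hn Q hQ ℓ hℓ X Y hQXY dX dY hXs hYs
end
end

section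
/- Let G be a simple graph on n vertices with adjacency matrix A and det W(G) ≠ 0, let p be a prime, and suppose the Smith normal form of W(G) is diag(d_1, ..., d_r, d_{r+1}, ..., d_n) where p ∤ d_r and p | d_{r+1}. Let a_0, ..., a_{r−1} be integers such that a_0 e + a_1 Ae + ··· + a_{r−1} A^{r−1}e + A^r e ≡ 0 (mod p), and set M = a_0 I + a_1 A + ··· + a_{r−1} A^{r−1} + A^r. Then the matrix Ŵ = [e, Ae, ..., A^{r−1}e, Me/p, AMe/p, ..., A^{n−r−1}Me/p] is an integral matrix whose Smith normal form is diag(d_1, ..., d_r, d_{r+1}/p, ..., d_n/p). -/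
open Matrix Polynomial
open scoped Classical

noncomputable section

/-- Membership in `Q(G)`: `Q` is a regular rational orthogonal matrix such that
`Qᵀ A Q` is a 0-1 matrix. -/
def inQSet {n : ℕ} (A : Matrix (Fin n) (Fin n) ℤ) (Q : Matrix (Fin n) (Fin n) ℚ) : Prop :=
  Qᵀ * Q = 1 ∧ (Q *ᵥ fun _ => (1 : ℚ)) = (fun _ => 1) ∧
  ∀ i j, (Qᵀ * A.map (Int.cast : ℤ → ℚ) * Q) i j = 0 ∨
         (Qᵀ * A.map (Int.cast : ℤ → ℚ) * Q) i j = 1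

/-- The matrix `M = a₀I + a₁A + ⋯ + a_{r-1}A^{r-1} + A^r`. -/
def Mpoly {n : ℕ} (A : Matrix (Fin n) (Fin n) ℤ) (r : ℕ) (a : Fin r → ℤ) :
    Matrix (Fin n) (Fin n) ℤ :=
  (∑ i : Fin r, a i • A ^ (i : ℕ)) + A ^ r

/-- The matrix `Ŵ = [e, Ae, …, A^{r-1}e, Me/p, AMe/p, …, A^{n-r-1}Me/p]`. -/
def What {n : ℕ} (A : Matrix (Fin n) (Fin n) ℤ) (r : ℕ) (a : Fin r → ℤ) (p : ℕ) :
    Matrix (Fin n) (Fin n) ℤ :=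
  Matrix.of fun k j =>
    if (j : ℕ) < r then ((A ^ (j : ℕ)) *ᵥ fun _ => (1 : ℤ)) k
    else ((A ^ ((j : ℕ) - r) * Mpoly A r a) *ᵥ fun _ => (1 : ℤ)) k / (p : ℤ)

/-! Column operations of determinant `1` turn `W = [e, …, A^{n-1}e]` into
`W C = [e, …, A^{r-1}e, Me, …, A^{n-r-1}Me] = Ŵ D` with `D = diag(1, …, 1, p, …, p)`.
Write `W = U diag(d) V` and `B = V C`. In the rows `i < r` of `diag(d) B = U⁻¹ Ŵ D` the entries
of the columns `j ≥ r` are divisible by `p`, while `p ∤ d_i`; so `B' = D B D⁻¹` is integral with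
`det B' = det B = ±1`, and `Ŵ = U diag(d D⁻¹) B'`. -/

theorem dvd_mul_mulVec_apply {R m n o : Type*} [CommSemiring R] [Fintype n] [Fintype o]
    (B : Matrix m n R) {M : Matrix n o R} {v : o → R} {p : R} (h : ∀ j, p ∣ (M *ᵥ v) j)
    (k : m) : p ∣ ((B * M) *ᵥ v) k := by
  rw [← mulVec_mulVec]
  exact Finset.dvd_sum fun j _ => (h j).mul_left _

theorem Matrix.eq_of_mul_diagonal_eq {R ι : Type*} [CommRing R] [IsDomain R] [Fintype ι]
    [DecidableEq ι] {X Y : Matrix ι ι R} {D : ι → R} (hD : ∀ j, D j ≠ 0)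
    (h : X * diagonal D = Y * diagonal D) : X = Y :=
  ext fun i j => mul_right_cancel₀ (hD j) (by simpa only [mul_diagonal] using congr_fun₂ h i j)

theorem exists_diagonal_mul_eq_mul_diagonal {ι : Type*} [Fintype ι] [DecidableEq ι]
    {D : ι → ℤ} (hD : ∀ i, D i ≠ 0) (B : Matrix ι ι ℤ) (hB : ∀ i j, D j ∣ D i * B i j) :
    ∃ B' : Matrix ι ι ℤ, diagonal D * B = B' * diagonal D ∧ B'.det = B.det := by
  have hconj : diagonal D * B = (of fun i j => D i * B i j / D j) * diagonal D := by
    ext i j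
    rw [diagonal_mul, mul_diagonal, of_apply, Int.ediv_mul_cancel (hB i j)]
  refine ⟨_, hconj, ?_⟩
  have hdet : (diagonal D).det ≠ 0 := by
    rw [det_diagonal]
    exact Finset.prod_ne_zero_iff.2 fun i _ => hD i
  have h := congrArg det hconj
  rw [det_mul, det_mul, mul_comm] at h
  exact (mul_right_cancel₀ hdet h).symm

theorem dvd_ite_ediv_of_le {n : ℕ} {d : Fin n → ℤ} {p : ℤ} (hp : Prime p) {r : ℕ}
    (hchain : ∀ i j : Fin n, i ≤ j → d i ∣ d j)
    (hlow : ∀ i : Fin n, (i : ℕ) < r → ¬ p ∣ d i) (hhigh : ∀ i : Fin n, r ≤ (i : ℕ) → p ∣ d i)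
    (i j : Fin n) (hij : i ≤ j) :
    (if (i : ℕ) < r then d i else d i / p) ∣ if (j : ℕ) < r then d j else d j / p := by
  by_cases hi : (i : ℕ) < r <;> by_cases hj : (j : ℕ) < r <;> simp only [hi, hj, if_true, if_false]
  · exact hchain i j hij
  · have hcop : IsCoprime (d i) p := (hp.coprime_iff_not_dvd.2 (hlow i hi)).symm
    have hdvd := hchain i j hij
    rw [← Int.mul_ediv_cancel' (hhigh j (not_lt.1 hj))] at hdvd
    exact hcop.dvd_of_dvd_mul_left hdvd
  · exact absurd ((Fin.le_def.1 hij).trans_lt hj) hi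
  · exact Int.ediv_dvd_ediv (hhigh i (not_lt.1 hi)) (hchain i j hij)

theorem IsSNF.of_mul_eq_mul_diagonal {n : ℕ} {W W' C : Matrix (Fin n) (Fin n) ℤ}
    {d : Fin n → ℤ} {p : ℤ} (hp : Prime p) {r : ℕ} (hW : IsSNF W d) (hC : IsUnimodular C)
    (hlow : ∀ i : Fin n, (i : ℕ) < r → ¬ p ∣ d i) (hhigh : ∀ i : Fin n, r ≤ (i : ℕ) → p ∣ d i)
    (hWC : W * C = W' * diagonal fun j : Fin n => if (j : ℕ) < r then 1 else p) :
    IsSNF W' fun i => if (i : ℕ) < r then d i else d i / p := by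
  obtain ⟨⟨U, V, hU, hV, rfl⟩, hchain⟩ := hW
  set D : Fin n → ℤ := fun j => if (j : ℕ) < r then 1 else p
  set d' : Fin n → ℤ := fun i => if (i : ℕ) < r then d i else d i / p
  have hD : ∀ j, D j ≠ 0 := fun j => by
    by_cases hj : (j : ℕ) < r <;> simp [D, hj, hp.ne_zero]
  have hd : diagonal d = diagonal d' * diagonal D := by
    rw [diagonal_mul_diagonal]
    congr
    funext i
    by_cases hi : (i : ℕ) < r
    · simp [d', D, hi]
    · simp only [d', D, hi, if_false]
      exact (Int.ediv_mul_cancel (hhigh i (not_lt.1 hi))).symm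
  have : Invertible U := U.invertibleOfIsUnitDet hU
  have hdB : diagonal d * (V * C) = ⅟U * W' * diagonal D := by
    rw [Matrix.mul_assoc, ← hWC, Matrix.mul_assoc, Matrix.mul_assoc, invOf_mul_cancel_left]
  have hB : ∀ i j, D j ∣ D i * (V * C) i j := by
    intro i j
    have h : D j ∣ d i * (V * C) i j := by
      have hij := congr_fun₂ hdB i j
      rw [diagonal_mul, mul_diagonal] at hij
      exact hij ▸ dvd_mul_left _ _
    by_cases hj : (j : ℕ) < r
    · simp [D, hj]
    by_cases hi : (i : ℕ) < r
    · simp only [D, hi, hj, if_true, if_false, one_mul] at h ⊢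
      exact (hp.dvd_mul.1 h).resolve_left (hlow i hi)
    · simp only [D, hi, hj, if_false]
      exact dvd_mul_right _ _
  obtain ⟨V', hV'conj, hV'det⟩ := exists_diagonal_mul_eq_mul_diagonal hD _ hB
  refine ⟨⟨U, V', hU, ?_, ?_⟩, dvd_ite_ediv_of_le hp hchain hlow hhigh⟩
  · rw [IsUnimodular, hV'det, det_mul]
    exact hV.mul hC
  · refine eq_of_mul_diagonal_eq hD ?_
    calc W' * diagonal D = U * (diagonal d' * (diagonal D * (V * C))) := by
          rw [← hWC, hd]; simp only [Matrix.mul_assoc]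
      _ = U * diagonal d' * V' * diagonal D := by
          rw [hV'conj]; simp only [Matrix.mul_assoc]

def mpolyColumnOp {n : ℕ} (r : ℕ) (a : Fin r → ℤ) : Matrix (Fin n) (Fin n) ℤ :=
  1 + of fun k j : Fin n =>
    if r ≤ (j : ℕ) then ∑ i : Fin r, if (k : ℕ) = j - r + i then a i else 0 else 0

theorem mpolyColumnOp_apply_of_le {n r : ℕ} (a : Fin r → ℤ) {k j : Fin n} (h : j ≤ k) :
    mpolyColumnOp r a k j = (1 : Matrix (Fin n) (Fin n) ℤ) k j := by
  have h' : (j : ℕ) ≤ k := h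
  rw [mpolyColumnOp, Matrix.add_apply, of_apply, add_eq_left]
  split_ifs
  · exact Finset.sum_eq_zero fun i _ => if_neg (by omega)
  · rfl

theorem det_mpolyColumnOp {n r : ℕ} (a : Fin r → ℤ) : (mpolyColumnOp (n := n) r a).det = 1 := by
  have htri : (mpolyColumnOp (n := n) r a).IsUpperTriangular := fun k j (hjk : j < k) => by
    rw [mpolyColumnOp_apply_of_le a hjk.le, one_apply_ne hjk.ne']
  rw [det_of_isUpperTriangular htri]
  exact Finset.prod_eq_one fun j _ => by rw [mpolyColumnOp_apply_of_le a le_rfl, one_apply_eq]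

theorem pow_sub_mul_Mpoly {n : ℕ} (A : Matrix (Fin n) (Fin n) ℤ) {r j : ℕ} (a : Fin r → ℤ)
    (hj : r ≤ j) :
    A ^ (j - r) * Mpoly A r a = ∑ i : Fin r, a i • A ^ (j - r + i) + A ^ j := by
  simp only [Mpoly, Matrix.mul_add, Finset.mul_sum, Matrix.mul_smul, ← pow_add,
    Nat.sub_add_cancel hj]

theorem walkMat_mul_mpolyColumnOp_apply {n : ℕ} (A : Matrix (Fin n) (Fin n) ℤ) (r : ℕ)
    (a : Fin r → ℤ) (k j : Fin n) :
    (walkMat A * mpolyColumnOp (n := n) r a) k j =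
      if (j : ℕ) < r then (A ^ (j : ℕ) *ᵥ fun _ => (1 : ℤ)) k
      else ((A ^ ((j : ℕ) - r) * Mpoly A r a) *ᵥ fun _ => (1 : ℤ)) k := by
  rw [mpolyColumnOp, Matrix.mul_add, mul_one, Matrix.add_apply, mul_apply]
  split_ifs with hj
  · simp [hj, walkMat]
  · rw [not_lt] at hj
    have hcol : ∀ i : Fin r, (j : ℕ) - r + i < n := fun i => by omega
    rw [pow_sub_mul_Mpoly A a hj, add_mulVec, sum_mulVec, Pi.add_apply, Finset.sum_apply, add_comm]
    simp only [of_apply, if_pos hj, Finset.mul_sum, smul_mulVec, Pi.smul_apply, smul_eq_mul]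
    rw [Finset.sum_comm]
    congr 1
    refine Finset.sum_congr rfl fun i _ => ?_
    rw [Fintype.sum_eq_single ⟨_, hcol i⟩ fun m hm => ?_]
    · simp [walkMat, mul_comm]
    · rw [if_neg (fun h => hm (Fin.ext h)), mul_zero]

theorem walkMat_mul_mpolyColumnOp {n : ℕ} {A : Matrix (Fin n) (Fin n) ℤ} {r p : ℕ}
    {a : Fin r → ℤ} (ha : ∀ k, (p : ℤ) ∣ (Mpoly A r a *ᵥ fun _ => (1 : ℤ)) k) :
    walkMat A * mpolyColumnOp r a =
      What A r a p * diagonal fun j : Fin n => if (j : ℕ) < r then 1 else (p : ℤ) := by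
  ext k j
  rw [walkMat_mul_mpolyColumnOp_apply, mul_diagonal, What, of_apply]
  split_ifs
  · rw [mul_one]
  · rw [Int.ediv_mul_cancel (dvd_mul_mulVec_apply _ ha k)]

/-- Lemma 7: if the SNF of `W(G)` is `diag(d₁,…,dₙ)` with `p ∤ d_r`,
`p ∣ d_{r+1}`, and `Me ≡ 0 (mod p)` where `M = a₀I + ⋯ + a_{r-1}A^{r-1} + A^r`, then
`Ŵ` is integral, with SNF `diag(d₁,…,d_r, d_{r+1}/p, …, d_n/p)`. -/
theorem stmt10 (n : ℕ) (G : SimpleGraph (Fin n)) (p : ℕ) (hp : p.Prime)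
    (r : ℕ) (hrn : r < n)
    (d : Fin n → ℤ) (hSNF : IsSNF (walkMat (adjMat n G)) d)
    (hdr : ¬ (p : ℤ) ∣ d ⟨r - 1, by omega⟩) (hdr1 : (p : ℤ) ∣ d ⟨r, hrn⟩)
    (a : Fin r → ℤ)
    (ha : ∀ k : Fin n, (p : ℤ) ∣ ((Mpoly (adjMat n G) r a) *ᵥ fun _ => (1 : ℤ)) k) :
    (∀ (k : Fin n) (i : ℕ), i < n - r →
      (p : ℤ) ∣ (((adjMat n G) ^ i * Mpoly (adjMat n G) r a) *ᵥ fun _ => (1 : ℤ)) k) ∧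
    IsSNF (What (adjMat n G) r a p)
      (fun i => if (i : ℕ) < r then d i else d i / (p : ℤ)) := by
  refine ⟨fun k i _ => dvd_mul_mulVec_apply _ ha k, ?_⟩
  refine hSNF.of_mul_eq_mul_diagonal (Nat.prime_iff_prime_int.mp hp) ?_ ?_ ?_
    (walkMat_mul_mpolyColumnOp ha)
  · rw [IsUnimodular, det_mpolyColumnOp]
    exact isUnit_one
  · intro i hi hpi
    exact hdr (hpi.trans (hSNF.2 _ _ (Fin.le_def.2 (Nat.le_sub_one_of_lt hi))))
  · intro i hi
    exact hdr1.trans (hSNF.2 _ _ hi)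
end
end

section
/- Let p be an odd prime and let G and H be generalized cospectral simple graphs on n vertices with adjacency matrices A and B and common characteristic polynomial φ(x) = x^n + c_2 x^{n−2} + ··· + c_{n−1} x + c_n (the coefficient of x^{n−1} is 0). Suppose rank_p W(G) = rank_p W(H) = n−1 and that φ(x) ≡ 0 (mod p) does not have two distinct roots in F_p. Then the linear systems W(G)x ≡ 0 (mod p) and W(H)x ≡ 0 (mod p) have the same set of solutions over F_p. -/
/-!
Over `𝔽_p`, `W x = 0` says that `f_x(A) e = 0` for `f_x = ∑ xᵢ Xⁱ`, i.e. that the generator `g`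
of the annihilator of `e` under `A` divides `f_x`. The solution space is a line, which forces
`deg g = n - 1`: otherwise `g` and `X g` would be two independent solutions. As `g ∣ φ`, `g` is
`φ / (X - a)` up to a unit, for a root `a` of `φ` mod `p`. The same holds for `H`, whose
characteristic polynomial is also `φ`, and `φ` has only one root mod `p`, so both solution sets
are the multiples of the same polynomial.
-/

open Matrix Polynomial
open scoped Classical

noncomputable section

section CommRing

variable {R : Type*} [CommRing R] {n : ℕ}

/-- The polynomial `∑ i, x i * X ^ i` with coefficient vector `x`. -/
def ofFinCoeffs (x : Fin n → R) : R[X] :=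
  (degreeLTEquiv R n).symm x

lemma degree_ofFinCoeffs_lt (x : Fin n → R) : (ofFinCoeffs x).degree < n :=
  mem_degreeLT.mp ((degreeLTEquiv R n).symm x).2

lemma ofFinCoeffs_smul (c : R) (x : Fin n → R) : ofFinCoeffs (c • x) = c • ofFinCoeffs x := by
  simp [ofFinCoeffs]

lemma ofFinCoeffs_eq_zero_iff {x : Fin n → R} : ofFinCoeffs x = 0 ↔ x = 0 := by
  simp [ofFinCoeffs]

lemma ofFinCoeffs_coeff {p : R[X]} (hp : p.degree < n) :
    ofFinCoeffs (fun i : Fin n => p.coeff i) = p :=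
  congrArg Subtype.val ((degreeLTEquiv R n).symm_apply_apply ⟨p, mem_degreeLT.mpr hp⟩)

namespace Matrix

def krylov (M : Matrix (Fin n) (Fin n) R) (v : Fin n → R) : Matrix (Fin n) (Fin n) R :=
  of fun i j => (M ^ (j : ℕ) *ᵥ v) i

lemma krylov_mulVec (M : Matrix (Fin n) (Fin n) R) (v x : Fin n → R) :
    krylov M v *ᵥ x = aeval M (ofFinCoeffs x) *ᵥ v := by
  have haeval : aeval M (ofFinCoeffs x) = ∑ j : Fin n, x j • M ^ (j : ℕ) := by
    simp [ofFinCoeffs, degreeLTEquiv, aeval_monomial, Algebra.smul_def]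
  rw [haeval, sum_mulVec]
  ext i
  simp [krylov, mulVec, dotProduct, Finset.sum_apply, smul_mulVec, mul_comm]

def annIdealVec (M : Matrix (Fin n) (Fin n) R) (v : Fin n → R) : Ideal R[X] where
  carrier := {f | aeval M f *ᵥ v = 0}
  add_mem' ha hb := by simp_all [add_mulVec]
  zero_mem' := by simp
  smul_mem' c f hf := by simp_all [← mulVec_mulVec]

lemma mem_annIdealVec {M : Matrix (Fin n) (Fin n) R} {v : Fin n → R} {f : R[X]} :
    f ∈ annIdealVec M v ↔ aeval M f *ᵥ v = 0 :=
  Iff.rfl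

lemma charpoly_mem_annIdealVec (M : Matrix (Fin n) (Fin n) R) (v : Fin n → R) :
    M.charpoly ∈ annIdealVec M v := by
  simp [mem_annIdealVec, aeval_self_charpoly]

end Matrix

lemma walkMat_map (A : Matrix (Fin n) (Fin n) ℤ) (f : ℤ →+* R) :
    (walkMat A).map f = (A.map f).krylov 1 := by
  ext i j
  rw [map_apply, walkMat, of_apply, RingHom.map_mulVec, krylov, of_apply,
    ← RingHom.mapMatrix_apply, map_pow]
  simp [Function.comp_def, Pi.one_def]

end CommRing

section Field

variable {K : Type*} [Field K] {n : ℕ}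

lemma natDegree_add_one_eq_of_finrank_eq_one {g : K[X]} {S : Submodule K (Fin n → K)}
    (hS : ∀ x, x ∈ S ↔ g ∣ ofFinCoeffs x) (h1 : Module.finrank K S = 1) :
    g.natDegree + 1 = n := by
  obtain ⟨⟨w, hwS⟩, hw0, hspan⟩ := finrank_eq_one_iff'.mp h1
  set P := ofFinCoeffs w
  have hP0 : P ≠ 0 := by simpa [P, ofFinCoeffs_eq_zero_iff] using hw0
  have hgP : g ∣ P := (hS w).mp hwS
  -- `S` is spanned by `w`, so the nonzero multiples of `g` of degree `< n` are the `c • P`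
  have hmul : ∀ q : K[X], q ≠ 0 → q.natDegree < n → g ∣ q → q.natDegree = P.natDegree := by
    intro q hq0 hqn hgq
    have hq := (natDegree_lt_iff_degree_lt hq0).mp hqn
    obtain ⟨c, hc⟩ := hspan ⟨_, (hS _).mpr (by rwa [ofFinCoeffs_coeff hq])⟩
    have hcq : c • P = q := by
      rw [← ofFinCoeffs_coeff hq, ← ofFinCoeffs_smul]
      exact congrArg (ofFinCoeffs ∘ Subtype.val) hc
    have hc0 : c ≠ 0 := by rintro rfl; simp [← hcq] at hq0
    rw [← hcq, natDegree_smul _ hc0]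
  have hg0 : g ≠ 0 := by rintro rfl; exact hP0 (zero_dvd_iff.mp hgP)
  have hPn : P.natDegree < n := (natDegree_lt_iff_degree_lt hP0).mpr (degree_ofFinCoeffs_lt w)
  have hgn : g.natDegree < n := (natDegree_le_of_dvd hgP hP0).trans_lt hPn
  by_contra hne
  have hXg : (X * g).natDegree = g.natDegree + 1 := by
    rw [natDegree_mul X_ne_zero hg0, natDegree_X, add_comm]
  have := hmul g hg0 hgn dvd_rfl
  have := hmul (X * g) (mul_ne_zero X_ne_zero hg0) (by omega) (dvd_mul_left _ _)
  omega

lemma exists_isRoot_associated_divByMonic {g φ : K[X]} (hg : g ∣ φ) (hφ : φ ≠ 0)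
    (hdeg : φ.natDegree = g.natDegree + 1) :
    ∃ a, φ.IsRoot a ∧ Associated g (φ /ₘ (X - C a)) := by
  obtain ⟨q, rfl⟩ := hg
  obtain ⟨hg0, hq0⟩ := mul_ne_zero_iff.mp hφ
  have hq1 : q.natDegree = 1 := by rw [natDegree_mul hg0 hq0] at hdeg; omega
  obtain ⟨a, ha⟩ := exists_root_of_degree_eq_one ((degree_eq_iff_natDegree_eq hq0).mpr hq1)
  have hroot : (g * q).IsRoot a := root_mul_left_of_isRoot g ha
  have hdvd : g ∣ g * q /ₘ (X - C a) := by
    conv_rhs => rw [← mul_divByMonic_eq_iff_isRoot.mpr ha, mul_left_comm]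
    rw [mul_divByMonic_cancel_left _ (monic_X_sub_C a)]
    exact dvd_mul_right _ _
  have hne : g * q /ₘ (X - C a) ≠ 0 := by
    intro h
    rw [← mul_divByMonic_eq_iff_isRoot.mpr hroot, h, mul_zero] at hφ
    exact hφ rfl
  refine ⟨a, hroot, associated_of_dvd_of_natDegree_le hdvd hne ?_⟩
  rw [natDegree_divByMonic _ (monic_X_sub_C a), natDegree_X_sub_C]
  omega

lemma Matrix.finrank_ker_mulVecLin_eq_one {A : Matrix (Fin n) (Fin n) K} (hn : 0 < n)
    (hrk : A.rank = n - 1) : Module.finrank K (LinearMap.ker A.mulVecLin) = 1 := by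
  have := LinearMap.finrank_range_add_finrank_ker A.mulVecLin
  rw [Module.finrank_fin_fun] at this
  change A.rank + _ = n at this
  omega

theorem Matrix.exists_isRoot_charpoly_krylov_mulVec_eq_zero_iff (M : Matrix (Fin n) (Fin n) K)
    (v : Fin n → K) (hn : 0 < n) (hrk : (M.krylov v).rank = n - 1) :
    ∃ a, M.charpoly.IsRoot a ∧
      ∀ x, M.krylov v *ᵥ x = 0 ↔ M.charpoly /ₘ (X - C a) ∣ ofFinCoeffs x := by
  set g := Submodule.IsPrincipal.generator (annIdealVec M v)
  have hker : ∀ x, M.krylov v *ᵥ x = 0 ↔ g ∣ ofFinCoeffs x := fun x => by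
    rw [krylov_mulVec, ← mem_annIdealVec, Submodule.IsPrincipal.mem_iff_generator_dvd]
  have hg : g.natDegree + 1 = n :=
    natDegree_add_one_eq_of_finrank_eq_one (S := LinearMap.ker (M.krylov v).mulVecLin)
      (fun x => hker x) (finrank_ker_mulVecLin_eq_one hn hrk)
  have hdvd : g ∣ M.charpoly :=
    (Submodule.IsPrincipal.mem_iff_generator_dvd _).mp (charpoly_mem_annIdealVec M v)
  obtain ⟨a, ha, hassoc⟩ := exists_isRoot_associated_divByMonic hdvd M.charpoly_monic.ne_zero
    (by rw [charpoly_natDegree_eq_dim, Fintype.card_fin, hg])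
  exact ⟨a, ha, fun x => (hker x).trans hassoc.dvd_iff_dvd_left⟩

end Field

theorem stmt12_general (n p : ℕ) (hp : p.Prime)
    (G H : SimpleGraph (Fin n)) (hGH : genCospectral G H)
    (hrkG : ((walkMat (adjMat n G)).map (Int.cast : ℤ → ZMod p)).rank = n - 1)
    (hrkH : ((walkMat (adjMat n H)).map (Int.cast : ℤ → ZMod p)).rank = n - 1)
    (hroots : ∀ x y : ZMod p,
      ((adjMat n G).charpoly.map (Int.castRingHom (ZMod p))).IsRoot x →
      ((adjMat n G).charpoly.map (Int.castRingHom (ZMod p))).IsRoot y → x = y) :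
    ∀ x : Fin n → ZMod p,
      ((walkMat (adjMat n G)).map (Int.cast : ℤ → ZMod p)) *ᵥ x = 0 ↔
      ((walkMat (adjMat n H)).map (Int.cast : ℤ → ZMod p)) *ᵥ x = 0 := by
  intro x
  rcases Nat.eq_zero_or_pos n with rfl | hn
  · simp [Subsingleton.elim x 0]
  have : Fact p.Prime := ⟨hp⟩
  simp only [← Int.coe_castRingHom, walkMat_map] at hrkG hrkH ⊢
  obtain ⟨a, ha, hG⟩ := exists_isRoot_charpoly_krylov_mulVec_eq_zero_iff _ _ hn hrkG
  obtain ⟨b, hb, hH⟩ := exists_isRoot_charpoly_krylov_mulVec_eq_zero_iff _ _ hn hrkH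
  rw [charpoly_map] at ha hb hG hH
  rw [← hGH.1] at hb hH
  obtain rfl := hroots a b ha hb
  rw [hG, hH]

/-- Lemma 8: let `p` be an odd prime and `G, H` generalized cospectral with
`rank_p W(G) = rank_p W(H) = n - 1`. If the common characteristic polynomial `φ` has no two
distinct roots mod `p`, then `W(G)x ≡ 0 (mod p)` and `W(H)x ≡ 0 (mod p)` have the same
solutions. -/
theorem stmt12 (n p : ℕ) (hp : p.Prime) (hpodd : Odd p)
    (G H : SimpleGraph (Fin n)) (hGH : genCospectral G H)
    (hrkG : ((walkMat (adjMat n G)).map (Int.cast : ℤ → ZMod p)).rank = n - 1)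
    (hrkH : ((walkMat (adjMat n H)).map (Int.cast : ℤ → ZMod p)).rank = n - 1)
    (hroots : ∀ x y : ZMod p,
      ((adjMat n G).charpoly.map (Int.castRingHom (ZMod p))).IsRoot x →
      ((adjMat n G).charpoly.map (Int.castRingHom (ZMod p))).IsRoot y → x = y) :
    ∀ x : Fin n → ZMod p,
      ((walkMat (adjMat n G)).map (Int.cast : ℤ → ZMod p)) *ᵥ x = 0 ↔
      ((walkMat (adjMat n H)).map (Int.cast : ℤ → ZMod p)) *ᵥ x = 0 :=
  stmt12_general n p hp G H hGH hrkG hrkH hroots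
end
end

section
/- Let G be a simple graph on n vertices with characteristic polynomial φ(x) = x^n + c_1 x^{n−1} + ··· + c_{n−1} x + c_n. Then c_i is even whenever i is odd. -/
/-!
By the principal-minor expansion of the characteristic polynomial, `cᵢ` is `(-1)ⁱ` times the sum
of the `i × i` principal minors of `A(G)`, so it suffices that a symmetric integer matrix with zero
diagonal and odd size has even determinant. Negating the entries below the diagonal gives a
skew-symmetric matrix `S` congruent to it mod 2, and for odd size
`det S = det Sᵀ = det (-S) = -det S`, so `det S = 0`.
-/

open Matrix Polynomial
open scoped Classical

noncomputable section

namespace Matrix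

variable {ι R : Type*}

theorem det_eq_zero_of_transpose_eq_neg [Fintype ι] [DecidableEq ι] [CommRing R]
    [NoZeroDivisors R] [CharZero R] {S : Matrix ι ι R} (hS : Sᵀ = -S) (hodd : Odd (Fintype.card ι)) : S.det = 0 := by
  refine self_eq_neg.mp ?_
  calc S.det = (-S).det := by rw [← hS, det_transpose]
    _ = -S.det := by rw [det_neg, hodd.neg_one_pow, neg_one_mul]

section skewLift

variable [LinearOrder ι] [Ring R]

def skewLift (A : Matrix ι ι R) : Matrix ι ι R :=
  of fun i j => if i < j then A i j else -A i j

theorem skewLift_transpose {A : Matrix ι ι R} (hA : A.IsSymm) (hdiag : ∀ i, A i i = 0) :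
    (skewLift A)ᵀ = -skewLift A := by
  ext i j
  simp only [skewLift, transpose_apply, neg_apply, of_apply, hA.apply i j]
  rcases lt_trichotomy i j with h | rfl | h
  · simp [h, h.not_gt]
  · simp [hdiag]
  · simp [h, h.not_gt]

theorem map_skewLift {S : Type*} [Ring S] [CharP S 2] (f : R →+* S) (A : Matrix ι ι R) :
    (skewLift A).map f = A.map f := by
  ext i j
  by_cases h : i < j <;> simp [skewLift, h, CharTwo.neg_eq]

end skewLift

theorem even_det_of_isSymm [Fintype ι] [LinearOrder ι] {A : Matrix ι ι ℤ} (hA : A.IsSymm)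
    (hdiag : ∀ i, A i i = 0) (hodd : Odd (Fintype.card ι)) : Even A.det := by
  have hS : (skewLift A).det = 0 :=
    det_eq_zero_of_transpose_eq_neg (skewLift_transpose hA hdiag) hodd
  have hmod : (A.det : ZMod 2) = 0 :=
    calc Int.castRingHom (ZMod 2) A.det
        = Int.castRingHom (ZMod 2) (skewLift A).det := by
          rw [RingHom.map_det, RingHom.map_det, RingHom.mapMatrix_apply,
            RingHom.mapMatrix_apply, map_skewLift]
      _ = 0 := by rw [hS, map_zero]
  exact even_iff_two_dvd.mpr ((ZMod.intCast_zmod_eq_zero_iff_dvd _ 2).mp hmod)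

theorem even_charpoly_coeff_of_isSymm [Fintype ι] [LinearOrder ι] {A : Matrix ι ι ℤ}
    (hA : A.IsSymm) (hdiag : ∀ i, A i i = 0) {k : ℕ} (hk : k ≤ Fintype.card ι) (hodd : Odd k) :
    Even (A.charpoly.coeff (Fintype.card ι - k)) := by
  rw [charpoly_coeff_eq_sum_minors A k hk]
  refine (Finset.even_sum _ fun s hs => ?_).mul_left _
  refine even_det_of_isSymm (hA.submatrix _) (fun _ => hdiag _) ?_
  rwa [Fintype.card_coe, (Finset.mem_powersetCard.mp hs).2]

end Matrix

theorem adjMat_isSymm (n : ℕ) (G : SimpleGraph (Fin n)) : (adjMat n G).IsSymm := by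
  ext i j
  simp [adjMat, G.adj_comm]

theorem adjMat_apply_self (n : ℕ) (G : SimpleGraph (Fin n)) (i : Fin n) : adjMat n G i i = 0 := by
  simp [adjMat]

/-- Lemma 11: writing the characteristic polynomial of `G` as
`xⁿ + c₁x^{n-1} + ⋯ + cₙ`, the coefficient `cᵢ` (the coefficient of `x^{n-i}`) is even
whenever `i` is odd. -/
theorem stmt17 (n : ℕ) (G : SimpleGraph (Fin n)) (i : ℕ) (hi : i ≤ n) (hiodd : Odd i) :
    Even ((adjMat n G).charpoly.coeff (n - i)) := by
  simpa using even_charpoly_coeff_of_isSymm (adjMat_isSymm n G) (adjMat_apply_self n G)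
    (by simpa using hi) hiodd
end
end

section
/- Let G be a simple graph on n vertices with adjacency matrix A and characteristic polynomial φ(x) = x^n + c_1 x^{n−1} + ··· + c_{n−1}x + c_n. Define M = A^{⌈n/2⌉} + c_2 A^{⌈(n−2)/2⌉} + ··· + c_{n−2}A + c_n I if n is even, and M = A^{⌈n/2⌉} + c_2 A^{⌈(n−2)/2⌉} + ··· + c_{n−3}A² + c_{n−1}A if n is odd. Then Me ≡ 0 (mod 2), i.e., every entry of Me is even. -/
open Matrix Polynomial
open scoped Classical

noncomputable section

/-- Given the coefficients `c i` of the characteristic polynomial, the matrix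
`M = A^{⌈n/2⌉} + c₂A^{⌈(n-2)/2⌉} + ⋯ + c_{n-2}A + cₙI` when `n` is even (resp.
`M = A^{⌈n/2⌉} + c₂A^{⌈(n-2)/2⌉} + ⋯ + c_{n-3}A² + c_{n-1}A` when `n` is odd): the `j`-th
summand is `c_{2j} • A^{⌈(n-2j)/2⌉}` for `j = 0, 1, …, ⌊n/2⌋` (with `c₀ = 1`). -/
def Mhalf {n : ℕ} (A : Matrix (Fin n) (Fin n) ℤ) (c : ℕ → ℤ) : Matrix (Fin n) (Fin n) ℤ :=
  ∑ j ∈ Finset.range (n / 2 + 1), c (2 * j) • A ^ ((n - 2 * j + 1) / 2)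

/-!
Reduce modulo 2: there `B = A mod 2` is symmetric with zero diagonal, and squaring a polynomial
just doubles its exponents. Hence `M = q(B)` for a polynomial `q` with
`q² = X^(n mod 2) φ + X r²`, and Cayley–Hamilton gives `M² = r(B) B r(B)`. Since `M` is
symmetric, `(Me)ᵢ² = Σⱼ Mᵢⱼ² = (M²)ᵢᵢ = ℓ ⬝ B ℓ` with `ℓ` the `i`-th row of `r(B)`, and this
quadratic form vanishes in characteristic 2 because `B` is alternating.
-/

namespace Matrix

variable {ι R : Type*} [Fintype ι]

lemma IsSymm.aeval [CommSemiring R] [DecidableEq ι] {B : Matrix ι ι R} (hB : B.IsSymm)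
    (f : R[X]) : (aeval B f).IsSymm := by
  induction f using Polynomial.induction_on' with
  | add f g hf hg => rw [map_add]; exact hf.add hg
  | monomial k a =>
    rw [aeval_monomial, Algebra.algebraMap_eq_smul_one, smul_one_mul]
    exact (hB.pow k).smul a

section CharTwo

variable [CommRing R] [CharP R 2]

lemma mulVec_one_sq_eq_mul_transpose_apply (M : Matrix ι ι R) (i : ι) :
    (M *ᵥ fun _ => 1) i ^ 2 = (M * Mᵀ) i i := by
  simp only [mulVec, dotProduct, mul_one]
  rw [CharTwo.sum_sq]
  simp only [mul_apply, transpose_apply, sq]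

lemma dotProduct_mulVec_self_eq_zero {B : Matrix ι ι R} (hB : B.IsSymm)
    (hdiag : ∀ i, B i i = 0) (v : ι → R) : v ⬝ᵥ B *ᵥ v = 0 := by
  have hpairs : v ⬝ᵥ B *ᵥ v = ∑ x : ι × ι, v x.1 * B x.1 x.2 * v x.2 := by
    simp only [dotProduct, mulVec, Finset.mul_sum, Fintype.sum_prod_type, mul_assoc]
  rw [hpairs]
  refine Finset.sum_ninvolution Prod.swap (fun x => ?_) (fun x hx hfix => hx ?_) (by simp)
    Prod.swap_swap
  · rw [Prod.fst_swap, Prod.snd_swap, hB.apply x.1 x.2,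
      show v x.2 * B x.1 x.2 * v x.1 = v x.1 * B x.1 x.2 * v x.2 by ring,
      CharTwo.add_self_eq_zero]
  · rw [← congrArg Prod.fst hfix, Prod.fst_swap, hdiag, mul_zero, zero_mul]

lemma mul_mul_transpose_apply_self_eq_zero {B : Matrix ι ι R} (hB : B.IsSymm)
    (hdiag : ∀ i, B i i = 0) (L : Matrix ι ι R) (i : ι) : (L * B * Lᵀ) i i = 0 := by
  rw [mul_mul_apply, transpose_transpose, dotProduct_mulVec_self_eq_zero hB hdiag]

end CharTwo

end Matrix

lemma Finset.sum_range_succ_eq_sum_parity {M : Type*} [AddCommMonoid M] (n : ℕ) (f : ℕ → M) :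
    ∑ i ∈ Finset.range (n + 1), f i =
      ∑ j ∈ Finset.range (n / 2 + 1), f (n - 2 * j) +
        ∑ j ∈ Finset.range ((n + 1) / 2), f (n - 2 * j - 1) := by
  induction n with
  | zero => simp
  | succ n ih =>
    have hsame : ∑ j ∈ Finset.range ((n + 1) / 2 + 1), f (n + 1 - 2 * j) =
        ∑ j ∈ Finset.range ((n + 1) / 2), f (n - 2 * j - 1) + f (n + 1) := by
      rw [Finset.sum_range_succ']
      congr 1
      exact Finset.sum_congr rfl fun j _ => congrArg f (by omega)
    have hother : ∑ j ∈ Finset.range ((n + 2) / 2), f (n + 1 - 2 * j - 1) =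
        ∑ j ∈ Finset.range (n / 2 + 1), f (n - 2 * j) := by
      rw [show (n + 2) / 2 = n / 2 + 1 by omega]
      exact Finset.sum_congr rfl fun j _ => congrArg f (by omega)
    rw [Finset.sum_range_succ, ih, hsame, hother]
    abel

namespace Polynomial

variable {R : Type*} [Semiring R]

/- For the characteristic polynomial `p` of an `n × n` matrix `A`, `p.coeff (n - i)` is the
paper's `cᵢ`, so `aeval A (evenSqrt n p)` is its matrix `M`. Over `𝔽₂` the squares of `evenSqrt`
and `oddSqrt` are the two parity parts of `X ^ (n % 2) * p` (`evenSqrt_sq`). -/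
def evenSqrt (n : ℕ) (p : R[X]) : R[X] :=
  ∑ j ∈ Finset.range (n / 2 + 1), C (p.coeff (n - 2 * j)) * X ^ ((n - 2 * j + 1) / 2)

def oddSqrt (n : ℕ) (p : R[X]) : R[X] :=
  ∑ j ∈ Finset.range ((n + 1) / 2), C (p.coeff (n - 2 * j - 1)) * X ^ ((n - 2 * j - 1) / 2)

lemma map_evenSqrt {S : Type*} [Semiring S] (φ : R →+* S) (n : ℕ) (p : R[X]) :
    (evenSqrt n p).map φ = evenSqrt n (p.map φ) := by
  simp [evenSqrt, Polynomial.map_sum]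

lemma evenSqrt_sq (n : ℕ) {p : (ZMod 2)[X]} (hp : p.natDegree ≤ n) :
    evenSqrt n p ^ 2 = X ^ (n % 2) * p + X * oddSqrt n p ^ 2 := by
  have hp_sum :
      X ^ (n % 2) * p = ∑ i ∈ Finset.range (n + 1), C (p.coeff i) * X ^ (i + n % 2) := by
    conv_lhs => rw [p.as_sum_range_C_mul_X_pow' (Nat.lt_succ_of_le hp), Finset.mul_sum]
    exact Finset.sum_congr rfl fun i _ => by ring
  rw [← ZMod.expand_card, ← ZMod.expand_card, hp_sum, Finset.sum_range_succ_eq_sum_parity]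
  simp only [evenSqrt, oddSqrt, map_sum, map_mul, expand_C, map_pow, expand_X, ← pow_mul,
    Finset.mul_sum]
  have hodd : ∑ j ∈ Finset.range ((n + 1) / 2),
        X * (C (p.coeff (n - 2 * j - 1)) * X ^ (2 * ((n - 2 * j - 1) / 2))) =
      ∑ j ∈ Finset.range ((n + 1) / 2),
        C (p.coeff (n - 2 * j - 1)) * X ^ (n - 2 * j - 1 + n % 2) := by
    refine Finset.sum_congr rfl fun j hj => ?_
    rw [Finset.mem_range] at hj
    rw [mul_left_comm, ← pow_succ']
    congr 2
    omega
  rw [hodd, add_assoc, CharTwo.add_self_eq_zero, add_zero]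
  refine Finset.sum_congr rfl fun j hj => ?_
  rw [Finset.mem_range] at hj
  congr 2
  omega

end Polynomial

namespace Matrix

lemma mulVec_one_aeval_evenSqrt_eq_zero {ι : Type*} [Fintype ι] [DecidableEq ι]
    {B : Matrix ι ι (ZMod 2)} (hB : B.IsSymm) (hdiag : ∀ i, B i i = 0) {n : ℕ}
    {p : (ZMod 2)[X]} (hpB : aeval B p = 0) (hp : p.natDegree ≤ n) :
    aeval B (evenSqrt n p) *ᵥ (fun _ => 1) = 0 := by
  set M := aeval B (evenSqrt n p)
  set L := aeval B (oddSqrt n p)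
  have hMM : M * Mᵀ = L * B * Lᵀ := by
    rw [(hB.aeval _).eq, (hB.aeval _).eq, ← map_mul, ← sq, evenSqrt_sq n hp,
      show X * oddSqrt n p ^ 2 = oddSqrt n p * X * oddSqrt n p by ring,
      map_add, map_mul, hpB, mul_zero, zero_add, map_mul, map_mul, aeval_X]
  funext i
  rw [Pi.zero_apply, ← pow_eq_zero_iff two_ne_zero, mulVec_one_sq_eq_mul_transpose_apply, hMM,
    mul_mul_transpose_apply_self_eq_zero hB hdiag]

end Matrix

lemma Mhalf_eq_aeval_evenSqrt {n : ℕ} (A : Matrix (Fin n) (Fin n) ℤ) (p : ℤ[X]) :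
    Mhalf A (fun i => p.coeff (n - i)) = aeval A (evenSqrt n p) := by
  simp [Mhalf, evenSqrt, Algebra.smul_def]

lemma adjMat_map {n : ℕ} (G : SimpleGraph (Fin n)) (R : Type*) [Ring R] :
    (adjMat n G).map (Int.castRingHom R) = G.adjMatrix R := by
  ext i j
  by_cases h : G.Adj i j <;> simp [adjMat, h]

/-- Lemma 12: for the matrix `M` built from the even-indexed coefficients of
the characteristic polynomial of `G`, we have `Me ≡ 0 (mod 2)`. -/
theorem stmt18 (n : ℕ) (G : SimpleGraph (Fin n)) :
    ∀ k, (2 : ℤ) ∣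
      ((Mhalf (adjMat n G) (fun i => (adjMat n G).charpoly.coeff (n - i))) *ᵥ
        fun _ => (1 : ℤ)) k := by
  intro k
  set B := G.adjMatrix (ZMod 2)
  have hM : (Mhalf (adjMat n G) fun i => (adjMat n G).charpoly.coeff (n - i)).map
      (Int.castRingHom (ZMod 2)) = aeval B (evenSqrt n B.charpoly) := by
    rw [Mhalf_eq_aeval_evenSqrt, ← RingHom.mapMatrix_apply,
      map_aeval_eq_aeval_map (φ := Int.castRingHom (ZMod 2)) (RingHom.ext_int _ _),
      map_evenSqrt, RingHom.mapMatrix_apply, ← charpoly_map, adjMat_map]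
  have hdeg : B.charpoly.natDegree ≤ n := by
    rw [charpoly_natDegree_eq_dim, Fintype.card_fin]
  have hMe := mulVec_one_aeval_evenSqrt_eq_zero (B := B) G.isSymm_adjMatrix
    (congrFun (G.diag_adjMatrix (α := ZMod 2))) (aeval_self_charpoly B) hdeg
  rw [show (2 : ℤ) = (2 : ℕ) from rfl, ← ZMod.intCast_zmod_eq_zero_iff_dvd,
    ← eq_intCast (Int.castRingHom _), RingHom.map_mulVec, hM]
  simpa [Function.comp_def] using congrFun hMe k
end
end
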